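/- arXiv:2401.06560 — 3 statements merged into one kernel-verified Lean document; each statement's English description precedes it below -/
import Mathlib

section
/- Let f = (x³ + y³ − xyz)·(21(x²+y²) − 22xy − 6(x+y)z + z²)·(3x + 3y + z) ∈ ℂ[x,y,z]. Then mdr(f) = 2; that is, there exists a nonzero Jacobian syzygy (a,b,c) ∈ AR(f) with a, b, c homogeneous of degree 2, while every Jacobian syzygy (a,b,c) ∈ AR(f) whose entries are homogeneous of degree 0 or of degree 1 is the zero triple. -/
open MvPolynomial

noncomputable section

abbrev S3 : Type := MvPolynomial (Fin 3) ℂ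

/-- The module of Jacobian syzygies `AR(f)` of a polynomial `f ∈ ℂ[x,y,z]`. -/
def AR (f : S3) : Submodule S3 (Fin 3 → S3) where
  carrier := {v | v 0 * pderiv 0 f + v 1 * pderiv 1 f + v 2 * pderiv 2 f = 0}
  add_mem' := by
    intro a b ha hb
    simp only [Set.mem_setOf_eq, Pi.add_apply] at *
    linear_combination ha + hb
  zero_mem' := by simp
  smul_mem' := by
    intro c v hv
    simp only [Set.mem_setOf_eq, Pi.smul_apply, smul_eq_mul] at *
    linear_combination c * hv

/-- The nodal cubic `E : x³ + y³ − xyz = 0`. -/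
def Ecubic : S3 := X 0 ^ 3 + X 1 ^ 3 - X 0 * X 1 * X 2

end

set_option maxHeartbeats 4000000

lemma deg_eq_sum3 (d : Fin 3 →₀ ℕ) : d.degree = d 0 + d 1 + d 2 := by
  have h : d.degree = ∑ i : Fin 3, d i :=
    Finset.sum_subset (Finset.subset_univ _) (by
      intro i _ hi
      simpa [Finsupp.notMem_support_iff] using hi)
  rw [h, Fin.sum_univ_three]

lemma homog0 (p : S3) (h : p.IsHomogeneous 0) : p = C (coeff 0 p) := by
  ext d
  by_cases hd : d = 0
  · subst hd; simp [coeff_C]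
  · rw [h.coeff_eq_zero (by
      rw [deg_eq_sum3]
      intro hc
      apply hd
      have h0 : d 0 = 0 := by omega
      have h1 : d 1 = 0 := by omega
      have h2 : d 2 = 0 := by omega
      ext i
      fin_cases i <;> simp [h0, h1, h2])]
    rw [coeff_C, if_neg (by exact fun hh => hd hh.symm)]

lemma single_cases (d : Fin 3 →₀ ℕ) (h : d 0 + d 1 + d 2 = 1) :
    d = Finsupp.single 0 1 ∨ d = Finsupp.single 1 1 ∨ d = Finsupp.single 2 1 := by
  rcases Nat.lt_or_ge (d 0) 1 with h0 | h0
  · rcases Nat.lt_or_ge (d 1) 1 with h1 | h1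
    · right; right; ext i; fin_cases i <;> simp [Finsupp.single_apply] <;> omega
    · right; left; ext i; fin_cases i <;> simp [Finsupp.single_apply] <;> omega
  · left; ext i; fin_cases i <;> simp [Finsupp.single_apply] <;> omega

lemma homog1 (p : S3) (h : p.IsHomogeneous 1) :
    p = C (coeff (Finsupp.single 0 1) p) * X 0 + C (coeff (Finsupp.single 1 1) p) * X 1 +
        C (coeff (Finsupp.single 2 1) p) * X 2 := by
  ext d
  rw [coeff_add, coeff_add, coeff_C_mul, coeff_C_mul, coeff_C_mul, coeff_X', coeff_X', coeff_X']
  by_cases hd : d.degree = 1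
  · rw [deg_eq_sum3] at hd
    rcases single_cases d hd with h1 | h1 | h1 <;> subst h1 <;>
      simp [Finsupp.single_eq_single_iff]
  · rw [h.coeff_eq_zero hd]
    rw [deg_eq_sum3] at hd
    have e0 : ¬ (Finsupp.single (0:Fin 3) 1 = d) := by
      intro hh; apply hd; rw [← hh]; simp [Finsupp.single_apply]
    have e1 : ¬ (Finsupp.single (1:Fin 3) 1 = d) := by
      intro hh; apply hd; rw [← hh]; simp [Finsupp.single_apply]
    have e2 : ¬ (Finsupp.single (2:Fin 3) 1 = d) := by
      intro hh; apply hd; rw [← hh]; simp [Finsupp.single_apply]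
    rw [if_neg e0, if_neg e1, if_neg e2]
    ring

theorem mdr_cubic_conic_line :
    let f : S3 := Ecubic *
      (C 21 * (X 0 ^ 2 + X 1 ^ 2) - C 22 * (X 0 * X 1) - C 6 * (X 0 + X 1) * X 2 + X 2 ^ 2) *
      (C 3 * X 0 + C 3 * X 1 + X 2)
    (∃ v ∈ AR f, v ≠ 0 ∧ ∀ t : Fin 3, MvPolynomial.IsHomogeneous (v t) 2) ∧
    (∀ v ∈ AR f,
      ((∀ t : Fin 3, MvPolynomial.IsHomogeneous (v t) 0) ∨
       (∀ t : Fin 3, MvPolynomial.IsHomogeneous (v t) 1)) → v = 0) := by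
  intro f
  have hfx : pderiv 0 f = (378 : S3) * X 0 ^ 5 - (15 : S3) * X 0 ^ 4 * X 1 + (15 : S3) * X 0 ^ 4 * X 2 - (12 : S3) * X 0 ^ 3 * X 1 ^ 2 - (484 : S3) * X 0 ^ 3 * X 1 * X 2 - (12 : S3) * X 0 ^ 3 * X 2 ^ 2 + (378 : S3) * X 0 ^ 2 * X 1 ^ 3 + (18 : S3) * X 0 ^ 2 * X 1 ^ 2 * X 2 - (18 : S3) * X 0 ^ 2 * X 1 * X 2 ^ 2 + (3 : S3) * X 0 ^ 2 * X 2 ^ 3 - (6 : S3) * X 0 * X 1 ^ 4 + (12 : S3) * X 0 * X 1 ^ 3 * X 2 + (116 : S3) * X 0 * X 1 ^ 2 * X 2 ^ 2 + (6 : S3) * X 0 * X 1 * X 2 ^ 3 - (3 : S3) * X 1 ^ 5 - (121 : S3) * X 1 ^ 4 * X 2 - (6 : S3) * X 1 ^ 3 * X 2 ^ 2 + (3 : S3) * X 1 ^ 2 * X 2 ^ 3 - X 1 * X 2 ^ 4 := by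
    simp only [f, Ecubic, pderiv_mul, pderiv_pow, map_add, map_sub, pderiv_C, pderiv_X_self,
      pderiv_X_of_ne (by decide : (1:Fin 3) ≠ 0), pderiv_X_of_ne (by decide : (2:Fin 3) ≠ 0)]
    simp only [map_ofNat]
    ring
  have hfy : pderiv 1 f = -(3 : S3) * X 0 ^ 5 - (6 : S3) * X 0 ^ 4 * X 1 - (121 : S3) * X 0 ^ 4 * X 2 + (378 : S3) * X 0 ^ 3 * X 1 ^ 2 + (12 : S3) * X 0 ^ 3 * X 1 * X 2 - (6 : S3) * X 0 ^ 3 * X 2 ^ 2 - (12 : S3) * X 0 ^ 2 * X 1 ^ 3 + (18 : S3) * X 0 ^ 2 * X 1 ^ 2 * X 2 + (116 : S3) * X 0 ^ 2 * X 1 * X 2 ^ 2 + (3 : S3) * X 0 ^ 2 * X 2 ^ 3 - (15 : S3) * X 0 * X 1 ^ 4 - (484 : S3) * X 0 * X 1 ^ 3 * X 2 - (18 : S3) * X 0 * X 1 ^ 2 * X 2 ^ 2 + (6 : S3) * X 0 * X 1 * X 2 ^ 3 - X 0 * X 2 ^ 4 + (378 : S3) * X 1 ^ 5 + (15 : S3)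 * X 1 ^ 4 * X 2 - (12 : S3) * X 1 ^ 3 * X 2 ^ 2 + (3 : S3) * X 1 ^ 2 * X 2 ^ 3 := by
    simp only [f, Ecubic, pderiv_mul, pderiv_pow, map_add, map_sub, pderiv_C, pderiv_X_self,
      pderiv_X_of_ne (by decide : (0:Fin 3) ≠ 1), pderiv_X_of_ne (by decide : (2:Fin 3) ≠ 1)]
    simp only [map_ofNat]
    ring
  have hfz : pderiv 2 f = (3 : S3) * X 0 ^ 5 - (121 : S3) * X 0 ^ 4 * X 1 - (6 : S3) * X 0 ^ 4 * X 2 + (6 : S3) * X 0 ^ 3 * X 1 ^ 2 - (12 : S3) * X 0 ^ 3 * X 1 * X 2 + (3 : S3) * X 0 ^ 3 * X 2 ^ 2 + (6 : S3) * X 0 ^ 2 * X 1 ^ 3 + (116 : S3) * X 0 ^ 2 * X 1 ^ 2 * X 2 + (9 : S3) * X 0 ^ 2 * X 1 * X 2 ^ 2 - (121 : S3) * X 0 * X 1 ^ 4 - (12 : S3) * X 0 * X 1 ^ 3 * X 2 + (9 : S3) * X 0 * X 1 ^ 2 * X 2 ^ 2 - (4 : S3) * X 0 * X 1 * X 2 ^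 3 + (3 : S3) * X 1 ^ 5 - (6 : S3) * X 1 ^ 4 * X 2 + (3 : S3) * X 1 ^ 3 * X 2 ^ 2 := by
    simp only [f, Ecubic, pderiv_mul, pderiv_pow, map_add, map_sub, pderiv_C, pderiv_X_self,
      pderiv_X_of_ne (by decide : (0:Fin 3) ≠ 2), pderiv_X_of_ne (by decide : (1:Fin 3) ≠ 2)]
    simp only [map_ofNat]
    ring
  constructor
  · refine ⟨![C 3 * X 1 ^ 2 - X 0 * X 1 - X 0 * X 2,
        X 0 * X 1 + X 1 * X 2 - C 3 * X 0 ^ 2,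
        C 3 * X 1 ^ 2 + X 1 * X 2 - C 3 * X 0 ^ 2 - X 0 * X 2], ?_, ?_, ?_⟩
    · show (C 3 * X 1 ^ 2 - X 0 * X 1 - X 0 * X 2) * pderiv 0 f +
          (X 0 * X 1 + X 1 * X 2 - C 3 * X 0 ^ 2) * pderiv 1 f +
          (C 3 * X 1 ^ 2 + X 1 * X 2 - C 3 * X 0 ^ 2 - X 0 * X 2) * pderiv 2 f = 0
      rw [hfx, hfy, hfz]
      simp only [map_ofNat]
      ring
    · intro hcontra
      have h0 : (C 3 * X 1 ^ 2 - X 0 * X 1 - X 0 * X 2 : S3) = 0 := congrFun hcontra 0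
      have := congrArg (eval ![(0:ℂ), 1, 0]) h0
      simp at this
    · intro t
      fin_cases t
      · show ((C 3 * X 1 ^ 2 - X 0 * X 1 - X 0 * X 2 : S3)).IsHomogeneous 2
        exact (((isHomogeneous_C _ _).mul ((isHomogeneous_X _ _).pow 2)).sub
          ((isHomogeneous_X _ _).mul (isHomogeneous_X _ _))).sub
          ((isHomogeneous_X _ _).mul (isHomogeneous_X _ _))
      · show ((X 0 * X 1 + X 1 * X 2 - C 3 * X 0 ^ 2 : S3)).IsHomogeneous 2
        exact (((isHomogeneous_X _ _).mul (isHomogeneous_X _ _)).add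
          ((isHomogeneous_X _ _).mul (isHomogeneous_X _ _))).sub
          ((isHomogeneous_C _ _).mul ((isHomogeneous_X _ _).pow 2))
      · show ((C 3 * X 1 ^ 2 + X 1 * X 2 - C 3 * X 0 ^ 2 - X 0 * X 2 : S3)).IsHomogeneous 2
        exact ((((isHomogeneous_C _ _).mul ((isHomogeneous_X _ _).pow 2)).add
          ((isHomogeneous_X _ _).mul (isHomogeneous_X _ _))).sub
          ((isHomogeneous_C _ _).mul ((isHomogeneous_X _ _).pow 2))).sub
          ((isHomogeneous_X _ _).mul (isHomogeneous_X _ _))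
  · intro v hv h
    have hv' : v 0 * pderiv 0 f + v 1 * pderiv 1 f + v 2 * pderiv 2 f = 0 := hv
    rw [hfx, hfy, hfz] at hv'
    rcases h with h0 | h1
    · have e0 : v 0 = C (coeff 0 (v 0)) := homog0 _ (h0 0)
      have e1 : v 1 = C (coeff 0 (v 1)) := homog0 _ (h0 1)
      have e2 : v 2 = C (coeff 0 (v 2)) := homog0 _ (h0 2)
      rw [e0, e1, e2] at hv'
      have q1 := congrArg (eval ![(1 : ℂ), (0 : ℂ), (0 : ℂ)]) hv'
      simp at q1
      have q2 := congrArg (eval ![(0 : ℂ), (1 : ℂ), (0 : ℂ)]) hv'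
      simp at q2
      have q3 := congrArg (eval ![(1 : ℂ), (1 : ℂ), (1 : ℂ)]) hv'
      simp at q3
      have z0 : coeff 0 (v 0) = 0 := by linear_combination ((125 : ℂ)/48006) * q1 + ((-1 : ℂ)/48006) * q2 + ((1 : ℂ)/16002) * q3
      have z1 : coeff 0 (v 1) = 0 := by linear_combination ((-1 : ℂ)/48006) * q1 + ((125 : ℂ)/48006) * q2 + ((1 : ℂ)/16002) * q3
      have z2 : coeff 0 (v 2) = 0 := by linear_combination ((251 : ℂ)/48006) * q1 + ((251 : ℂ)/48006) * q2 + ((-125 : ℂ)/16002) * q3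
      funext t
      fin_cases t
      · show v 0 = 0
        rw [e0, z0, map_zero]
      · show v 1 = 0
        rw [e1, z1, map_zero]
      · show v 2 = 0
        rw [e2, z2, map_zero]
    · have e0 : v 0 = C (coeff (Finsupp.single 0 1) (v 0)) * X 0 +
          C (coeff (Finsupp.single 1 1) (v 0)) * X 1 + C (coeff (Finsupp.single 2 1) (v 0)) * X 2 :=
        homog1 _ (h1 0)
      have e1 : v 1 = C (coeff (Finsupp.single 0 1) (v 1)) * X 0 +
          C (coeff (Finsupp.single 1 1) (v 1)) * X 1 + C (coeff (Finsupp.single 2 1) (v 1)) * X 2 :=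
        homog1 _ (h1 1)
      have e2 : v 2 = C (coeff (Finsupp.single 0 1) (v 2)) * X 0 +
          C (coeff (Finsupp.single 1 1) (v 2)) * X 1 + C (coeff (Finsupp.single 2 1) (v 2)) * X 2 :=
        homog1 _ (h1 2)
      rw [e0, e1, e2] at hv'
      have q1 := congrArg (eval ![(1 : ℂ), (0 : ℂ), (0 : ℂ)]) hv'
      simp at q1
      have q2 := congrArg (eval ![(0 : ℂ), (1 : ℂ), (0 : ℂ)]) hv'
      simp at q2
      have q3 := congrArg (eval ![(1 : ℂ), (1 : ℂ), (0 : ℂ)]) hv'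
      simp at q3
      have q4 := congrArg (eval ![(1 : ℂ), (0 : ℂ), (1 : ℂ)]) hv'
      simp at q4
      have q5 := congrArg (eval ![(0 : ℂ), (1 : ℂ), (1 : ℂ)]) hv'
      simp at q5
      have q6 := congrArg (eval ![(1 : ℂ), (1 : ℂ), (1 : ℂ)]) hv'
      simp at q6
      have q7 := congrArg (eval ![(1 : ℂ), (0 : ℂ), (-1 : ℂ)]) hv'
      simp at q7
      have q8 := congrArg (eval ![(0 : ℂ), (1 : ℂ), (-1 : ℂ)]) hv'
      simp at q8
      have q9 := congrArg (eval ![(2 : ℂ), (1 : ℂ), (0 : ℂ)]) hv'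
      simp at q9
      have w0 : coeff (Finsupp.single 0 1) (v 0) = 0 := by
        linear_combination ((23181665 : ℂ)/19489615284) * q1 + ((8486509 : ℂ)/12993076856) * q2 + ((-4054427 : ℂ)/51972307424) * q3 + ((371072117 : ℂ)/831556918784) * q4 + ((-83358383 : ℂ)/831556918784) * q5 + ((-55181 : ℂ)/3248269214) * q6 + ((8714249 : ℂ)/12993076856) * q7 + ((-19300303 : ℂ)/38979230568) * q8 + ((1 : ℂ)/128664) * q9
      have w1 : coeff (Finsupp.single 1 1) (v 0) = 0 := by
        linear_combination ((749652407 : ℂ)/16241346070) * q1 + ((-1141568063 : ℂ)/97448076420) * q2 + ((581181847 : ℂ)/519723074240) * q3 + ((-76964844291 : ℂ)/4157784593920) * q4 + ((-7218851151 : ℂ)/4157784593920) * q5 + ((16145703 : ℂ)/16241346070) * q6 + ((-1496111081 : ℂ)/64965384280) * q7 + ((828755357 : ℂ)/64965384280) * q8 + ((-41 : ℂ)/321660) * q9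
      have w2 : coeff (Finsupp.single 2 1) (v 0) = 0 := by
        linear_combination ((-200016359 : ℂ)/129930768560) * q1 + ((10392423901 : ℂ)/779584611360) * q2 + ((-1466827327 : ℂ)/2078892296960) * q3 + ((-4228783827 : ℂ)/8315569187840) * q4 + ((-51934897717 : ℂ)/8315569187840) * q5 + ((8500803 : ℂ)/16241346070) * q6 + ((173046273 : ℂ)/129930768560) * q7 + ((-875779321 : ℂ)/129930768560) * q8 + ((67 : ℂ)/2573280) * q9
      have w3 : coeff (Finsupp.single 0 1) (v 1) = 0 := by
        linear_combination ((-734027971 : ℂ)/48724038210) * q1 + ((1390475521 : ℂ)/32482692140) * q2 + ((-1223733437 : ℂ)/519723074240) * q3 + ((-7311201519 : ℂ)/4157784593920) * q4 + ((-77057194659 : ℂ)/4157784593920) * q5 + ((16181127 : ℂ)/16241346070) * q6 + ((828023261 : ℂ)/64965384280) * q7 + ((-1496843177 : ℂ)/64965384280) * q8 + ((41 : ℂ)/321660) * q9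
      have w4 : coeff (Finsupp.single 1 1) (v 1) = 0 := by
        linear_combination ((5570441 : ℂ)/6496538428) * q1 + ((54326449 : ℂ)/38979230568) * q2 + ((3475577 : ℂ)/25986153712) * q3 + ((-82232159 : ℂ)/831556918784) * q4 + ((372198341 : ℂ)/831556918784) * q5 + ((-55613 : ℂ)/3248269214) * q6 + ((-19273519 : ℂ)/38979230568) * q7 + ((8723177 : ℂ)/12993076856) * q8 + ((-1 : ℂ)/128664) * q9
      have w5 : coeff (Finsupp.single 2 1) (v 1) = 0 := by
        linear_combination ((5462976437 : ℂ)/389792305680) * q1 + ((-222189727 : ℂ)/259861537120) * q2 + ((7920527 : ℂ)/2078892296960) * q3 + ((-51897169213 : ℂ)/8315569187840) * q4 + ((-4191055323 : ℂ)/8315569187840) * q5 + ((8493567 : ℂ)/16241346070) * q6 + ((-875480233 : ℂ)/129930768560) * q7 + ((173345361 : ℂ)/129930768560) * q8 + ((-67 : ℂ)/2573280) * q9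
      have w6 : coeff (Finsupp.single 0 1) (v 2) = 0 := by
        linear_combination ((1367515604 : ℂ)/8120673035) * q1 + ((-641387407 : ℂ)/16241346070) * q2 + ((3884844583 : ℂ)/519723074240) * q3 + ((-241086635229 : ℂ)/4157784593920) * q4 + ((-24541413369 : ℂ)/4157784593920) * q5 + ((50945157 : ℂ)/16241346070) * q6 + ((-4661953609 : ℂ)/64965384280) * q7 + ((2556220453 : ℂ)/64965384280) * q8 + ((-137 : ℂ)/160830) * q9
      have w7 : coeff (Finsupp.single 1 1) (v 2) = 0 := by
        linear_combination ((-502518254 : ℂ)/8120673035) * q1 + ((2371382107 : ℂ)/16241346070) * q2 + ((-8177272193 : ℂ)/519723074240) * q3 + ((-25158584121 : ℂ)/4157784593920) * q4 + ((-241703805981 : ℂ)/4157784593920) * q5 + ((51181893 : ℂ)/16241346070) * q6 + ((2551327909 : ℂ)/64965384280) * q7 + ((-4666846153 : ℂ)/64965384280) * q8 + ((137 : ℂ)/160830) * q9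
      have w8 : coeff (Finsupp.single 2 1) (v 2) = 0 := by
        linear_combination ((-38677 : ℂ)/2726583) * q1 + ((-38677 : ℂ)/2726583) * q2 + ((258773 : ℂ)/58167104) * q3 + ((4675169 : ℂ)/465336832) * q4 + ((4675169 : ℂ)/465336832) * q5 + ((-15041 : ℂ)/1817722) * q6 + ((23681 : ℂ)/21812664) * q7 + ((23681 : ℂ)/21812664) * q8
      funext t
      fin_cases t
      · show v 0 = 0
        rw [e0, w0, w1, w2]
        simp
      · show v 1 = 0
        rw [e1, w3, w4, w5]
        simp
      · show v 2 = 0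
        rw [e2, w6, w7, w8]
        simp
end

section
/- Let ω ∈ ℂ be a primitive cube root of unity and let f = (x³ + y³ − xyz)·(3x + 3y + z)·(3x + 3ω²y + ωz)·(3x + 3ωy − (ω+1)z) ∈ ℂ[x,y,z]. Then f = 0 is a free curve with exponents (2,3); that is, AR(f) is a free ℂ[x,y,z]-module admitting a basis consisting of two Jacobian syzygies whose entries are homogeneous of degrees 2 and 3 respectively. -/
open MvPolynomial

/-!
The three lines are the factors of `a³ + b³ + c³ - 3abc` at `(a, b, c) = (3x, 3y, z)`, so
`f = E · L` with `L = z³ + 27E`, and `∇f = G · ∇E + (0, 0, 3z²E)` with `G = z³ + 54E`.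
For a syzygy `(a, b, c)` this reads `(a E_x + b E_y + c E_z) · G + c · 3z²E = 0`. The prime `z`
divides neither `E` nor `G`, so `G` is coprime to `z²E` and divides `c`. Subtracting `c / G` times
the degree-3 syzygy `(A, B, G)`, for which `A E_x + B E_y = xyG - 3z²E`, leaves a syzygy of
`(E_x, E_y)`; since `E_y` is irreducible (linear in `x` with coprime coefficients) and does not
divide `E_x`, this is a multiple of the degree-2 syzygy `(E_y, -E_x, 0)`.
-/

theorem exists_eq_mul_of_mul_add_mul_eq_zero {R : Type*} [CommRing R] [IsDomain R]
    [DecompositionMonoid R] {p q a b : R} (hp : p ≠ 0) (hpq : IsRelPrime p q)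
    (h : a * q + b * p = 0) : ∃ l, a = l * p ∧ b = -(l * q) := by
  obtain ⟨l, rfl⟩ : p ∣ a := hpq.dvd_of_dvd_mul_right ⟨-b, by linear_combination h⟩
  refine ⟨l, mul_comm p l, mul_left_cancel₀ hp ?_⟩
  linear_combination h

theorem Submodule.exists_basis_fin_two {R M : Type*} [Ring R] [AddCommGroup M] [Module R M]
    {N : Submodule R M} {u v : M} (hu : u ∈ N) (hv : v ∈ N)
    (hli : ∀ a b : R, a • u + b • v = 0 → a = 0 ∧ b = 0)
    (hspan : ∀ w ∈ N, ∃ a b : R, w = a • u + b • v) :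
    ∃ B : Module.Basis (Fin 2) R N, (B 0 : M) = u ∧ (B 1 : M) = v := by
  refine ⟨Module.Basis.mk (v := ![⟨u, hu⟩, ⟨v, hv⟩]) ?_ ?_, ?_, ?_⟩
  · rw [LinearIndependent.pair_iff]
    intro a b h
    exact hli a b (by simpa using congrArg Subtype.val h)
  · rintro ⟨w, hw⟩ -
    obtain ⟨a, b, rfl⟩ := hspan w hw
    rw [Matrix.range_cons_cons_empty, Submodule.mem_span_pair]
    exact ⟨a, b, rfl⟩
  all_goals rw [Module.Basis.mk_apply]; rfl

theorem MvPolynomial.IsHomogeneous.ofNat_mul {σ R : Type*} [CommSemiring R]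
    {φ : MvPolynomial σ R} {n : ℕ} (hφ : φ.IsHomogeneous n) (k : ℕ) [k.AtLeastTwo] :
    (ofNat(k) * φ : MvPolynomial σ R).IsHomogeneous n := by
  have h := hφ.C_mul (ofNat(k) : R)
  rwa [map_ofNat] at h

theorem MvPolynomial.isUnit_ofNat {σ K : Type*} [Field K] [CharZero K] (n : ℕ) [n.AtLeastTwo] :
    IsUnit (ofNat(n) : MvPolynomial σ K) := by
  have h := (isUnit_iff_ne_zero.mpr (by norm_num : (ofNat(n) : K) ≠ 0)).map
    (C : K →+* MvPolynomial σ K)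
  rwa [map_ofNat] at h

namespace FreeCubicThreeLines

noncomputable section

def Lcubic : S3 := X 2 ^ 3 + 27 * Ecubic

lemma lines_mul_eq_Lcubic {ω : ℂ} (hω : IsPrimitiveRoot ω 3) :
    (C 3 * X 0 + C 3 * X 1 + X 2) * (C 3 * X 0 + C 3 * C (ω ^ 2) * X 1 + C ω * X 2) *
      (C 3 * X 0 + C 3 * C ω * X 1 - C (ω + 1) * X 2) = Lcubic := by
  have hω' : (C ω : S3) ^ 2 + C ω + 1 = 0 := by
    have h := congrArg (C : ℂ → S3) (hω.geom_sum_eq_zero (by norm_num))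
    simp only [Finset.sum_range_succ, Finset.sum_range_zero, map_add, map_pow, map_zero] at h
    linear_combination h
  simp only [map_pow, map_add, map_one, map_ofNat, Lcubic, Ecubic]
  linear_combination (27 * X 0 ^ 2 * X 1 - 3 * X 0 * X 2 ^ 2 + 18 * X 0 * X 1 * X 2 - X 2 ^ 3
    - 27 * X 1 ^ 3 + C ω * (27 * X 0 * X 1 ^ 2 - 9 * X 0 * X 1 * X 2 + 27 * X 1 ^ 3
    - 3 * X 1 * X 2 ^ 2)) * hω'

def Ex : S3 := 3 * X 0 ^ 2 - X 1 * X 2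

def Ey : S3 := 3 * X 1 ^ 2 - X 0 * X 2

def Gcubic : S3 := X 2 ^ 3 + 54 * Ecubic

lemma mem_AR_Ecubic_mul_Lcubic_iff {v : Fin 3 → S3} : v ∈ AR (Ecubic * Lcubic) ↔
    (v 0 * Ex + v 1 * Ey - v 2 * (X 0 * X 1)) * Gcubic + v 2 * (3 * X 2 ^ 2 * Ecubic) = 0 := by
  have h27 : ∀ i, pderiv i (27 : S3) = 0 := fun i ↦ by exact_mod_cast (pderiv i).map_natCast 27
  change v 0 * pderiv 0 _ + v 1 * pderiv 1 _ + v 2 * pderiv 2 _ = 0 ↔ _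
  simp only [Ecubic, Lcubic, Ex, Ey, Gcubic, map_add, map_sub, Derivation.leibniz,
    Derivation.leibniz_pow, pderiv_X, Pi.single_apply, Fin.isValue, Fin.reduceEq, ↓reduceIte, h27,
    smul_eq_mul, nsmul_eq_mul]
  constructor <;> intro h <;> linear_combination h

lemma Gcubic_ne_zero : Gcubic ≠ 0 := fun h ↦ by
  simpa [Gcubic, Ecubic] using congrArg (eval ![0, 0, 1]) h

lemma X_two_not_dvd_Ecubic : ¬ X 2 ∣ Ecubic := by
  rintro ⟨q, hq⟩
  simpa [Ecubic] using congrArg (eval ![1, 0, 0]) hq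

lemma isRelPrime_Gcubic : IsRelPrime Gcubic (3 * X 2 ^ 2 * Ecubic) := by
  have hE : IsRelPrime (X 2) Ecubic :=
    X_prime.irreducible.isRelPrime_iff_not_dvd.mpr X_two_not_dvd_Ecubic
  have hGE : IsRelPrime Gcubic Ecubic := hE.pow_left.add_mul_right_left 54
  have hGz : IsRelPrime Gcubic (X 2) := by
    rw [show Gcubic = 54 * Ecubic + X 2 ^ 2 * X 2 by rw [Gcubic]; ring]
    exact (isRelPrime_mul_unit_left_left (isUnit_ofNat 54)).mpr hE.symm |>.add_mul_right_left _
  rw [mul_assoc, isRelPrime_mul_unit_left_right (isUnit_ofNat 3)]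
  exact hGz.pow_right.mul_right hGE

lemma finSuccEquiv_Ey :
    finSuccEquiv ℂ 2 Ey = Polynomial.C (-X 1) * Polynomial.X + Polynomial.C (3 * X 0 ^ 2) := by
  rw [Ey, show (X 1 : S3) = X (Fin.succ 0) from rfl, show (X 2 : S3) = X (Fin.succ 1) from rfl]
  simp only [map_sub, map_mul, map_pow, map_ofNat, map_neg, finSuccEquiv_X_zero,
    finSuccEquiv_X_succ]
  ring

lemma prime_Ey : Prime Ey := by
  rw [← MulEquiv.prime_iff (finSuccEquiv ℂ 2).toMulEquiv]
  change Prime (finSuccEquiv ℂ 2 Ey)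
  rw [finSuccEquiv_Ey]
  refine (Polynomial.irreducible_C_mul_X_add_C (neg_ne_zero.mpr (X_ne_zero 1)) ?_).prime
  refine X_prime.neg.irreducible.isRelPrime_iff_not_dvd.mpr ?_
  rintro ⟨q, hq⟩
  simpa using congrArg (eval ![1, 0]) hq

lemma isRelPrime_Ey_Ex : IsRelPrime Ey Ex := by
  refine prime_Ey.irreducible.isRelPrime_iff_not_dvd.mpr ?_
  rintro ⟨q, hq⟩
  simpa [Ex, Ey] using congrArg (eval ![1, 0, 0]) hq

def syz₂ : Fin 3 → S3 := ![Ey, -Ex, 0]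

def syz₃ : Fin 3 → S3 :=
  ![18 * X 0 ^ 2 * X 1 - 6 * X 1 ^ 2 * X 2 - X 0 * X 2 ^ 2, 18 * X 0 * X 1 ^ 2 - 3 * X 1 * X 2 ^ 2,
    Gcubic]

lemma syz₃_zero_mul_Ex_add_syz₃_one_mul_Ey :
    syz₃ 0 * Ex + syz₃ 1 * Ey = X 0 * X 1 * Gcubic - 3 * X 2 ^ 2 * Ecubic := by
  simp only [syz₃, Matrix.cons_val_zero, Matrix.cons_val_one, Ex, Ey, Gcubic, Ecubic]
  ring

lemma syz₂_mem_AR : syz₂ ∈ AR (Ecubic * Lcubic) := by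
  rw [mem_AR_Ecubic_mul_Lcubic_iff]
  simp only [syz₂, Matrix.cons_val_zero, Matrix.cons_val_one, Matrix.cons_val_two,
    Matrix.tail_cons, Matrix.head_cons]
  ring

lemma syz₃_mem_AR : syz₃ ∈ AR (Ecubic * Lcubic) := by
  rw [mem_AR_Ecubic_mul_Lcubic_iff, show syz₃ 2 = Gcubic from rfl]
  linear_combination Gcubic * syz₃_zero_mul_Ex_add_syz₃_one_mul_Ey

lemma exists_eq_smul_add_smul_of_mem_AR {v : Fin 3 → S3} (hv : v ∈ AR (Ecubic * Lcubic)) :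
    ∃ l m : S3, v = l • syz₂ + m • syz₃ := by
  rw [mem_AR_Ecubic_mul_Lcubic_iff] at hv
  obtain ⟨m, hm, -⟩ := exists_eq_mul_of_mul_add_mul_eq_zero (a := v 2)
    (b := v 0 * Ex + v 1 * Ey - v 2 * (X 0 * X 1)) Gcubic_ne_zero isRelPrime_Gcubic
    (by linear_combination hv)
  have h : (v 0 - m * syz₃ 0) * Ex + (v 1 - m * syz₃ 1) * Ey = 0 := by
    refine mul_right_cancel₀ Gcubic_ne_zero ?_
    rw [hm] at hv
    linear_combination hv - m * Gcubic * syz₃_zero_mul_Ex_add_syz₃_one_mul_Ey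
  obtain ⟨l, hl0, hl1⟩ :=
    exists_eq_mul_of_mul_add_mul_eq_zero prime_Ey.ne_zero isRelPrime_Ey_Ex h
  refine ⟨l, m, funext fun i ↦ ?_⟩
  fin_cases i
  · show v 0 = l * Ey + m * syz₃ 0
    linear_combination hl0
  · show v 1 = l * -Ex + m * syz₃ 1
    linear_combination hl1
  · show v 2 = l * 0 + m * Gcubic
    linear_combination hm

lemma smul_syz₂_add_smul_syz₃_eq_zero {l m : S3} (h : l • syz₂ + m • syz₃ = 0) :
    l = 0 ∧ m = 0 := by
  have hm : m = 0 := by simpa [syz₂, syz₃, Gcubic_ne_zero] using congrFun h 2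
  refine ⟨?_, hm⟩
  simpa [syz₂, syz₃, hm, prime_Ey.ne_zero] using congrFun h 0

lemma isHomogeneous_Ecubic : Ecubic.IsHomogeneous 3 :=
  ((isHomogeneous_X_pow 0 3).add (isHomogeneous_X_pow 1 3)).sub
    (((isHomogeneous_X ℂ 0).mul (isHomogeneous_X ℂ 1)).mul (isHomogeneous_X ℂ 2))

lemma isHomogeneous_Ex : Ex.IsHomogeneous 2 :=
  ((isHomogeneous_X_pow 0 2).ofNat_mul 3).sub ((isHomogeneous_X ℂ 1).mul (isHomogeneous_X ℂ 2))

lemma isHomogeneous_Ey : Ey.IsHomogeneous 2 :=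
  ((isHomogeneous_X_pow 1 2).ofNat_mul 3).sub ((isHomogeneous_X ℂ 0).mul (isHomogeneous_X ℂ 2))

lemma isHomogeneous_syz₂ (t : Fin 3) : (syz₂ t).IsHomogeneous 2 := by
  fin_cases t
  exacts [isHomogeneous_Ey, isHomogeneous_Ex.neg, isHomogeneous_zero _ _ _]

lemma isHomogeneous_syz₃ (t : Fin 3) : (syz₃ t).IsHomogeneous 3 := by
  fin_cases t
  · exact ((((isHomogeneous_X_pow 0 2).ofNat_mul 18).mul (isHomogeneous_X ℂ 1)).sub
      (((isHomogeneous_X_pow 1 2).ofNat_mul 6).mul (isHomogeneous_X ℂ 2))).sub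
      ((isHomogeneous_X ℂ 0).mul (isHomogeneous_X_pow 2 2))
  · exact (((isHomogeneous_X ℂ 0).ofNat_mul 18).mul (isHomogeneous_X_pow 1 2)).sub
      (((isHomogeneous_X ℂ 1).ofNat_mul 3).mul (isHomogeneous_X_pow 2 2))
  · exact (isHomogeneous_X_pow 2 3).add (isHomogeneous_Ecubic.ofNat_mul 54)

lemma exists_basis_AR_Ecubic_mul_Lcubic :
    ∃ b : Module.Basis (Fin 2) S3 (AR (Ecubic * Lcubic)),
      (∀ t, ((b 0 : Fin 3 → S3) t).IsHomogeneous 2) ∧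
      (∀ t, ((b 1 : Fin 3 → S3) t).IsHomogeneous 3) := by
  obtain ⟨B, hB₀, hB₁⟩ := Submodule.exists_basis_fin_two syz₂_mem_AR syz₃_mem_AR
    (fun _ _ ↦ smul_syz₂_add_smul_syz₃_eq_zero) fun _ ↦ exists_eq_smul_add_smul_of_mem_AR
  exact ⟨B, hB₀ ▸ isHomogeneous_syz₂, hB₁ ▸ isHomogeneous_syz₃⟩

end

end FreeCubicThreeLines

open FreeCubicThreeLines

theorem free_cubic_three_lines (ω : ℂ) (hω : IsPrimitiveRoot ω 3) :
    let f : S3 := Ecubic *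
      (C 3 * X 0 + C 3 * X 1 + X 2) *
      (C 3 * X 0 + C 3 * C (ω ^ 2) * X 1 + C ω * X 2) *
      (C 3 * X 0 + C 3 * C ω * X 1 - C (ω + 1) * X 2)
    ∃ b : Module.Basis (Fin 2) S3 (AR f),
      (∀ t : Fin 3, MvPolynomial.IsHomogeneous ((b 0 : Fin 3 → S3) t) 2) ∧
      (∀ t : Fin 3, MvPolynomial.IsHomogeneous ((b 1 : Fin 3 → S3) t) 3) := by
  intro f
  have hf : f = Ecubic * Lcubic := by
    rw [← lines_mul_eq_Lcubic hω]
    ring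
  rw [hf]
  exact exists_basis_AR_Ecubic_mul_Lcubic
end

section
/- Let E = x³ + y³ − xyz and C₁ = 21(x²+y²) − 22xy − 6(x+y)z + z², regarded as homogeneous polynomials over ℂ. If (x,y,z) ∈ ℂ³ is a nonzero triple with E(x,y,z) = 0 and C₁(x,y,z) = 0, then (x,y,z) is a scalar multiple of (1,1,2). In other words, the hyperosculating conic C₁ = 0 meets the nodal cubic E = 0 in the projective plane only at the sextactic point P₁ = (1:1:2). -/
/-- The hyperosculating conic `C₁ : 21(x²+y²) − 22xy − 6(x+y)z + z² = 0` meets the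
nodal cubic `E : x³ + y³ − xyz = 0` only at the sextactic point `P₁ = (1 : 1 : 2)`. -/
theorem conic_meets_cubic_only_at_sextactic (x y z : ℂ) (hne : (x, y, z) ≠ 0)
    (hE : x ^ 3 + y ^ 3 - x * y * z = 0)
    (hC : 21 * (x ^ 2 + y ^ 2) - 22 * (x * y) - 6 * (x + y) * z + z ^ 2 = 0) :
    ∃ c : ℂ, x = c * 1 ∧ y = c * 1 ∧ z = c * 2 := by
  have h6 : (x - y) ^ 6 = 0 := by
    linear_combination x ^ 2 * y ^ 2 * hC -
      (6 * (x + y) * x * y - 2 * (x ^ 3 + y ^ 3) + (x ^ 3 + y ^ 3 - x * y * z)) * hE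
  have hxy : x = y := sub_eq_zero.mp ((pow_eq_zero_iff (n := 6) (by norm_num)).mp h6)
  rcases eq_or_ne x 0 with hx | hx
  · exfalso
    subst hx
    have hy : y = 0 := by
      have : y ^ 3 = 0 := by linear_combination hE
      exact pow_eq_zero_iff (by norm_num) |>.mp this
    subst hy
    have hz : z = 0 := by
      have : z ^ 2 = 0 := by linear_combination hC
      exact pow_eq_zero_iff (by norm_num) |>.mp this
    subst hz
    exact hne rfl
  · refine ⟨x, by ring, by rw [hxy]; ring, ?_⟩
    have h2 : x ^ 2 * (2 * x - z) = 0 := by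
      subst hxy; linear_combination hE
    rcases mul_eq_zero.mp h2 with h | h
    · exact absurd (pow_eq_zero_iff (by norm_num) |>.mp h) hx
    · linear_combination -h
end
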